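/- Let s₀ ≥ s₁ ≥ s₂ ≥ |s₃| be real numbers with s₃ possibly negative, and let x, y ∈ ℝ³. Define the four-vectors l_A = (√(1+‖x‖²), x₁, x₂, x₃) and l_B = (√(1+‖y‖²), y₁, y₂, y₃). Then l_Aᵀ · diag(s₀, s₁, s₂, s₃) · l_B ≥ s₀. -/

import Mathlib

open Matrix Complex Kronecker
open scoped ComplexOrder

noncomputable section

/-- The Pauli matrix σ₀ (the 2×2 identity). -/
def pauli0 : Matrix (Fin 2) (Fin 2) ℂ := 1
/-- The Pauli matrix σ₁. -/
def pauli1 : Matrix (Fin 2) (Fin 2) ℂ := !![0, 1; 1, 0]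
/-- The Pauli matrix σ₂. -/
def pauli2 : Matrix (Fin 2) (Fin 2) ℂ := !![0, -I; I, 0]
/-- The Pauli matrix σ₃. -/
def pauli3 : Matrix (Fin 2) (Fin 2) ℂ := !![1, 0; 0, -1]

/-- The four Pauli matrices. -/
def pauli : Fin 4 → Matrix (Fin 2) (Fin 2) ℂ := ![pauli0, pauli1, pauli2, pauli3]

/-- Kronecker product of two 2×2 complex matrices as a 4×4 matrix, with
entry `(2i+j, 2k+l)` equal to `A i k * B j l`. -/
def kron (A B : Matrix (Fin 2) (Fin 2) ℂ) : Matrix (Fin 4) (Fin 4) ℂ :=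
  Matrix.reindex finProdFinEquiv finProdFinEquiv (A ⊗ₖ B)

/-- The Lorentz metric matrix `diag(1,-1,-1,-1)`. -/
def Mmetric : Matrix (Fin 4) (Fin 4) ℝ := Matrix.diagonal ![1, -1, -1, -1]

/-- A real 4×4 matrix is a proper orthochronous Lorentz transformation if
`L M Lᵀ = M`, `det L = 1` and `L₀₀ > 0`. -/
def IsProperOrthochronousLorentz (L : Matrix (Fin 4) (Fin 4) ℝ) : Prop :=
  L * Mmetric * Lᵀ = Mmetric ∧ L.det = 1 ∧ 0 < L 0 0

/-- The matrix `T` transforming the density-matrix picture to the `R`-picture. -/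
def Tmat : Matrix (Fin 4) (Fin 4) ℂ :=
  ((Real.sqrt 2 : ℂ))⁻¹ • !![1, 0, 0, 1; 0, 1, 1, 0; 0, I, -I, 0; 1, 0, 0, -1]

/-- The real parameterization `R(ρ)ᵢⱼ = Tr(ρ (σᵢ ⊗ σⱼ))` of a 4×4 matrix. -/
def Rmat (ρ : Matrix (Fin 4) (Fin 4) ℂ) : Matrix (Fin 4) (Fin 4) ℂ :=
  fun i j => Matrix.trace (ρ * kron (pauli i) (pauli j))

/-- The Lorentz transformation `L(A) = T (A ⊗ A̅) T† / |det A|` associated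
with a 2×2 matrix `A`. -/
def Lmat (A : Matrix (Fin 2) (Fin 2) ℂ) : Matrix (Fin 4) (Fin 4) ℂ :=
  ((‖A.det‖ : ℂ))⁻¹ • (Tmat * kron A (A.map (starRingEnd ℂ)) * Tmatᴴ)

/-- The singular values of a 4×4 complex matrix: the nonnegative square roots of
the eigenvalues of `Mᴴ M`. -/
def singularValues (M : Matrix (Fin 4) (Fin 4) ℂ) : Fin 4 → ℝ :=
  fun i => Real.sqrt ((Matrix.isHermitian_conjTranspose_mul_self M).eigenvalues i)

/-- The multiset of singular values of a 4×4 complex matrix. -/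
def singularValuesMultiset (M : Matrix (Fin 4) (Fin 4) ℂ) : Multiset ℝ :=
  Finset.univ.val.map (singularValues M)

/-- The square root of a positive semidefinite matrix, as defined in the older Mathlib
(`Matrix.PosSemidef.sqrt`, since removed). -/
def Matrix.PosSemidef.sqrt {n 𝕜 : Type*} [Fintype n] [DecidableEq n] [RCLike 𝕜]
    {A : Matrix n n 𝕜} (hA : A.PosSemidef) : Matrix n n 𝕜 :=
  hA.1.eigenvectorUnitary.1 * diagonal ((↑) ∘ (√·) ∘ hA.1.eigenvalues) *
    (star hA.1.eigenvectorUnitary : Matrix n n 𝕜)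

open scoped Classical in
/-- The concurrence of a two-qubit state `ρ`:
`max (0, τ₁ - τ₂ - τ₃ - τ₄) = max (0, 2 max τᵢ - ∑ τᵢ)` where the `τᵢ` are the
singular values of `Xᵀ (σ₂ ⊗ σ₂) X` with `ρ = X Xᴴ` (here `X = √ρ`). -/
def concurrence (ρ : Matrix (Fin 4) (Fin 4) ℂ) : ℝ :=
  if h : ρ.PosSemidef then
    let τ := singularValues (h.sqrtᵀ * kron pauli2 pauli2 * h.sqrt)
    max 0 (2 * Finset.univ.sup' Finset.univ_nonempty τ - ∑ i, τ i)
  else 0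

/-- A two-qubit density matrix: positive semidefinite with trace 1. -/
def IsDensityMatrix (ρ : Matrix (Fin 4) (Fin 4) ℂ) : Prop :=
  ρ.PosSemidef ∧ ρ.trace = 1

/-- The reshuffled matrix `X̃` with `X̃_{2k+l,2k'+l'} = X_{2k+k',2l+l'}`. -/
def reshuffle (X : Matrix (Fin 4) (Fin 4) ℂ) : Matrix (Fin 4) (Fin 4) ℂ :=
  fun i j =>
    X ⟨2 * (i.val / 2) + j.val / 2, by have := i.isLt; have := j.isLt; omega⟩
      ⟨2 * (i.val % 2) + j.val % 2, by have := i.isLt; have := j.isLt; omega⟩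

/-- The partial transpose on the second qubit:
`(ρ^PT)_{2i+j,2k+l} = ρ_{2i+l,2k+j}`. -/
def ptranspose (ρ : Matrix (Fin 4) (Fin 4) ℂ) : Matrix (Fin 4) (Fin 4) ℂ :=
  fun a b =>
    ρ ⟨2 * (a.val / 2) + b.val % 2, by have := a.isLt; have := b.isLt; omega⟩
      ⟨2 * (b.val / 2) + a.val % 2, by have := a.isLt; have := b.isLt; omega⟩


private lemma cauchy3_aux (u0 u1 u2 v0 v1 v2 : ℝ) :
    (u0 * v0 + u1 * v1 + u2 * v2) ^ 2 ≤
      (u0 ^ 2 + u1 ^ 2 + u2 ^ 2) * (v0 ^ 2 + v1 ^ 2 + v2 ^ 2) := by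
  nlinarith [sq_nonneg (u0 * v1 - u1 * v0), sq_nonneg (u0 * v2 - u2 * v0),
    sq_nonneg (u1 * v2 - u2 * v1)]

/-- for ordered `s₀ ≥ s₁ ≥ s₂ ≥ |s₃|` and future-pointing unit
Lorentz vectors `l_A, l_B`, we have `l_Aᵀ diag(s₀,s₁,s₂,s₃) l_B ≥ s₀`. -/
theorem lorentz_vector_bound (s₀ s₁ s₂ s₃ : ℝ)
    (h01 : s₁ ≤ s₀) (h12 : s₂ ≤ s₁) (h23 : |s₃| ≤ s₂)
    (x y : EuclideanSpace ℝ (Fin 3)) :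
    s₀ ≤ (![Real.sqrt (1 + ‖x‖ ^ 2), x 0, x 1, x 2] : Fin 4 → ℝ) ⬝ᵥ
      (Matrix.diagonal ![s₀, s₁, s₂, s₃]).mulVec
        ![Real.sqrt (1 + ‖y‖ ^ 2), y 0, y 1, y 2] := by
  have hx : ‖x‖ ^ 2 = x 0 ^ 2 + x 1 ^ 2 + x 2 ^ 2 := by
    rw [EuclideanSpace.norm_eq, Real.sq_sqrt (by positivity)]
    simp [Fin.sum_univ_three, sq_abs]
  have hy : ‖y‖ ^ 2 = y 0 ^ 2 + y 1 ^ 2 + y 2 ^ 2 := by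
    rw [EuclideanSpace.norm_eq, Real.sq_sqrt (by positivity)]
    simp [Fin.sum_univ_three, sq_abs]
  set a := ‖x‖; set b := ‖y‖
  have ha : 0 ≤ a := norm_nonneg _
  have hb : 0 ≤ b := norm_nonneg _
  have hAB : 1 + a * b ≤ Real.sqrt (1 + a ^ 2) * Real.sqrt (1 + b ^ 2) := by
    have h1 : (1 + a * b) ^ 2 ≤ (1 + a ^ 2) * (1 + b ^ 2) := by nlinarith [sq_nonneg (a - b)]
    have h2 := Real.sqrt_le_sqrt h1
    rwa [Real.sqrt_mul (by positivity), Real.sqrt_sq (by positivity)] at h2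
  have hc : |x 0| * |y 0| + |x 1| * |y 1| + |x 2| * |y 2| ≤ a * b := by
    have h1 : (|x 0| * |y 0| + |x 1| * |y 1| + |x 2| * |y 2|) ^ 2 ≤ (a * b) ^ 2 := by
      rw [mul_pow, hx, hy]
      have := cauchy3_aux |x 0| |x 1| |x 2| |y 0| |y 1| |y 2|
      simpa [sq_abs] using this
    have h2 := Real.sqrt_le_sqrt h1
    rwa [Real.sqrt_sq (by positivity), Real.sqrt_sq (mul_nonneg ha hb)] at h2
  have h3 : 0 ≤ s₂ := (abs_nonneg s₃).trans h23
  have h1s : 0 ≤ s₁ := h3.trans h12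
  have h0 : 0 ≤ s₀ := h1s.trans h01
  have t0 : -(s₁ * (|x 0| * |y 0|)) ≤ s₁ * (x 0 * y 0) := by
    nlinarith [abs_mul (x 0) (y 0), neg_abs_le (x 0 * y 0)]
  have t1 : -(s₁ * (|x 1| * |y 1|)) ≤ s₂ * (x 1 * y 1) := by
    nlinarith [abs_mul (x 1) (y 1), neg_abs_le (x 1 * y 1), abs_nonneg (x 1 * y 1),
      mul_nonneg (abs_nonneg (x 1)) (abs_nonneg (y 1))]
  have t2 : -(s₁ * (|x 2| * |y 2|)) ≤ s₃ * (x 2 * y 2) := by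
    have h2 : |s₃ * (x 2 * y 2)| ≤ s₁ * (|x 2| * |y 2|) := by
      rw [abs_mul, abs_mul]
      exact mul_le_mul (h23.trans h12) le_rfl (by positivity) h1s
    linarith [neg_abs_le (s₃ * (x 2 * y 2))]
  have key : -(s₁ * (a * b)) ≤ s₁ * (x 0 * y 0) + s₂ * (x 1 * y 1) + s₃ * (x 2 * y 2) := by
    have := mul_le_mul_of_nonneg_left hc h1s
    nlinarith
  have hAB' : s₀ * (1 + a * b) ≤ s₀ * (Real.sqrt (1 + a ^ 2) * Real.sqrt (1 + b ^ 2)) :=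
    mul_le_mul_of_nonneg_left hAB h0
  have hs1 : s₁ * (a * b) ≤ s₀ * (a * b) :=
    mul_le_mul_of_nonneg_right h01 (mul_nonneg ha hb)
  simp only [dotProduct, Matrix.mulVec_diagonal, Fin.sum_univ_four]
  simp only [Matrix.cons_val_zero, Matrix.cons_val_one, Matrix.head_cons,
    Matrix.cons_val_two, Matrix.tail_cons, Matrix.cons_val_three]
  ring_nf
  ring_nf at hAB' key hs1
  linarith
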